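/- arXiv:2203.12384 — 8 statements merged into one kernel-verified Lean document; each statement's English description precedes it below -/
import Mathlib

section
/- If a_0, ..., a_{n-1} ∈ F_{q^m} are linearly independent over F_q, then the s×n Moore matrix with entries a_j^{q^i}, 0 ≤ i < s, 0 ≤ j < n, has rank min{s, n}. -/
/-!
A vanishing `F`-linear combination, with coefficients `cᵢ`, of the rows of the Moore matrix says
that the `q`-linearized polynomial `∑ cᵢ X ^ q ^ i`, of degree `< q ^ s`, vanishes at every `aⱼ`.
Since `x ↦ x ^ q` is `F_q`-linear, it vanishes on the whole `F_q`-span of the `aⱼ`, which has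
`q ^ n ≥ q ^ s` elements, so the polynomial is zero. Hence the rows are independent when
`s ≤ n`, and in general the first `min s n` rows already have rank `min s n`.
-/

open Polynomial Module

namespace Moore

section LinearizedPoly

variable {R : Type*} [Semiring R] {q s : ℕ}

noncomputable def linearizedPoly (q : ℕ) (c : Fin s → R) : R[X] :=
  ∑ i, C (c i) * X ^ q ^ (i : ℕ)

theorem natDegree_linearizedPoly_lt (hq : 1 < q) (c : Fin s → R) :
    (linearizedPoly q c).natDegree < q ^ s := by
  cases s with
  | zero => simp [linearizedPoly]
  | succ s =>
    refine (natDegree_sum_le_of_forall_le _ _ fun i _ => (natDegree_C_mul_X_pow_le _ _).trans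
      (Nat.pow_le_pow_right hq.le (Nat.lt_succ_iff.mp i.is_lt))).trans_lt ?_
    exact Nat.pow_lt_pow_right hq s.lt_succ_self

theorem coeff_linearizedPoly_pow (hq : 1 < q) (c : Fin s → R) (i : Fin s) :
    (linearizedPoly q c).coeff (q ^ (i : ℕ)) = c i := by
  simp [linearizedPoly, coeff_C_mul, coeff_X_pow, (Nat.pow_right_injective hq).eq_iff,
    Fin.val_inj]

end LinearizedPoly

section FiniteField

variable {Fq F : Type*} [Field Fq] [Fintype Fq] [CommRing F] [Algebra Fq F] {s : ℕ}

variable (Fq) in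
noncomputable def linearizedMap (c : Fin s → F) : F →ₗ[Fq] F :=
  ∑ i, c i • ((FiniteField.frobeniusAlgHom Fq F) ^ (i : ℕ)).toLinearMap

theorem linearizedMap_apply (c : Fin s → F) (x : F) :
    linearizedMap Fq c x = (linearizedPoly (Fintype.card Fq) c).eval x := by
  simp [linearizedMap, linearizedPoly, eval_finsetSum, AlgHom.coe_pow,
    FiniteField.coe_frobeniusAlgHom, pow_iterate]

theorem eq_zero_of_le_ker_linearizedMap [IsDomain F] {c : Fin s → F} {V : Submodule Fq F}
    [FiniteDimensional Fq V] (hsV : s ≤ finrank Fq V)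
    (hV : V ≤ LinearMap.ker (linearizedMap Fq c)) : c = 0 := by
  have hq : 1 < Fintype.card Fq := Fintype.one_lt_card
  have := Module.finite_of_finite Fq (M := V)
  have := Fintype.ofFinite V
  have hpoly : linearizedPoly (Fintype.card Fq) c = 0 := by
    refine eq_zero_of_natDegree_lt_card_of_eval_eq_zero _ Subtype.val_injective
      (fun x : V => (linearizedMap_apply c x).symm.trans (hV x.2)) ?_
    calc _ < Fintype.card Fq ^ s := natDegree_linearizedPoly_lt hq c
      _ ≤ Fintype.card Fq ^ finrank Fq V := Nat.pow_le_pow_right Fintype.card_pos hsV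
      _ = Fintype.card V := card_eq_pow_finrank.symm
  ext i
  rw [← coeff_linearizedPoly_pow hq c i, hpoly, coeff_zero, Pi.zero_apply]

end FiniteField

def mooreMatrix {R : Type*} [Monoid R] {n : ℕ} (q s : ℕ) (a : Fin n → R) :
    Matrix (Fin s) (Fin n) R :=
  Matrix.of fun i j => a j ^ q ^ (i : ℕ)

theorem mooreMatrix_submatrix_castLE {R : Type*} [Monoid R] {n s k : ℕ} (q : ℕ)
    (a : Fin n → R) (hks : k ≤ s) :
    (mooreMatrix q s a).submatrix (Fin.castLE hks) id = mooreMatrix q k a :=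
  rfl

variable {Fq F : Type*} [Field Fq] [Fintype Fq] {s n : ℕ}

theorem linearIndependent_mooreMatrix_row [CommRing F] [IsDomain F] [Algebra Fq F]
    {a : Fin n → F} (h : LinearIndependent Fq a) (hsn : s ≤ n) :
    LinearIndependent F (mooreMatrix (Fintype.card Fq) s a).row := by
  have := FiniteDimensional.span_of_finite Fq (Set.finite_range a)
  rw [Fintype.linearIndependent_iff]
  intro c hc
  have hker : Submodule.span Fq (Set.range a) ≤ LinearMap.ker (linearizedMap Fq c) := by
    refine Submodule.span_le.mpr (Set.range_subset_iff.mpr fun j => ?_)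
    simpa [linearizedMap_apply, linearizedPoly, eval_finsetSum, mooreMatrix] using congrFun hc j
  have hsV : s ≤ finrank Fq (Submodule.span Fq (Set.range a)) := by
    rwa [finrank_span_eq_card h, Fintype.card_fin]
  exact congrFun (eq_zero_of_le_ker_linearizedMap hsV hker)

theorem rank_mooreMatrix_of_le [Field F] [Algebra Fq F] {a : Fin n → F}
    (h : LinearIndependent Fq a) (hsn : s ≤ n) :
    (mooreMatrix (Fintype.card Fq) s a).rank = s :=
  (linearIndependent_mooreMatrix_row h hsn).rank_matrix.trans (Fintype.card_fin s)

end Moore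

open Moore in
theorem moore_matrix_rank_general (Fq F : Type*) [Field Fq] [Fintype Fq]
    [Field F] [Algebra Fq F] (s n : ℕ) (a : Fin n → F)
    (h : LinearIndependent Fq a) :
    (Matrix.of fun (i : Fin s) (j : Fin n) =>
        a j ^ (Fintype.card Fq) ^ (i : ℕ)).rank = min s n := by
  change (mooreMatrix (Fintype.card Fq) s a).rank = min s n
  refine le_antisymm (le_min (Matrix.rank_le_height _) (Matrix.rank_le_width _)) ?_
  rw [← rank_mooreMatrix_of_le h (min_le_right s n),
    ← mooreMatrix_submatrix_castLE _ a (min_le_left s n)]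
  exact Matrix.rank_submatrix_le _ _ _

/-- If `a_0, ..., a_{n-1} ∈ F_{q^m}` are linearly independent over `F_q`, then
the `s×n` Moore matrix with entries `a_j^{q^i}` (`0 ≤ i < s`, `0 ≤ j < n`) has rank
`min {s, n}`. -/
theorem moore_matrix_rank (Fq F : Type*) [Field Fq] [Fintype Fq]
    [Field F] [Fintype F] [Algebra Fq F] (s n : ℕ) (a : Fin n → F)
    (h : LinearIndependent Fq a) :
    (Matrix.of fun (i : Fin s) (j : Fin n) =>
        a j ^ (Fintype.card Fq) ^ (i : ℕ)).rank = min s n :=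
  moore_matrix_rank_general Fq F s n a h
end

section
/- For 0 ≤ τ ≤ min{n, m}, the cardinality of the ball of rank radius τ in F_{q^m}^n satisfies q^{τ(m+n−τ)} ≤ |B_τ| < K_q^{-1} · q^{τ(m+n−τ)}, where K_q = Π_{j=1}^{∞} (1 − q^{-j}). -/
/-- The `F_q`-rank of a vector `a ∈ F_{q^m}^n` with respect to a fixed basis `β`. -/
noncomputable def rankq (Fq F : Type*) [Field Fq] [Field F] [Algebra Fq F]
    {m n : ℕ} (β : Module.Basis (Fin m) Fq F) (a : Fin n → F) : ℕ :=
  (Matrix.of fun (i : Fin m) (j : Fin n) => β.repr (a j) i).rank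

/-!
Expanding coordinates in `β` identifies the ball with the `m × n` matrices over `F_q` of rank at
most `τ`. Each such matrix factors as `X * Y` with `X : F_q^{m × τ}` injective, and the pairs
`(X * G, G⁻¹ * Y)`, `G ∈ GL_τ(F_q)`, are pairwise distinct; hence `|B_τ| · |GL_τ| ≤ q^{τ(m+n)}`,
while `|GL_τ| = q^{τ²} ∏_{j=1}^{τ} (1 - q^{-j}) > q^{τ²} K_q`. Conversely, for every
`A : F_q^{m × τ}` with injective factor `X_A` and every `Z : F_q^{τ × (n-τ)}`, the block matrices
`[A | X_A * Z]` are pairwise distinct of rank at most `τ`, which gives `q^{mτ + τ(n-τ)}` of them.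
-/

open Module Function Finset

theorem Submodule.exists_le_finrank_eq {K V : Type*} [DivisionRing K] [AddCommGroup V]
    [Module K V] [FiniteDimensional K V] (N : Submodule K V) {r : ℕ}
    (hNr : finrank K N ≤ r) (hr : r ≤ finrank K V) :
    ∃ W : Submodule K V, N ≤ W ∧ finrank K W = r := by
  induction r, hNr using Nat.le_induction with
  | base => exact ⟨N, le_rfl, rfl⟩
  | succ r _ ih =>
    obtain ⟨W, hNW, hW⟩ := ih (by omega)
    have hW_ne_top : W ≠ ⊤ := fun h => by rw [h, finrank_top] at hW; omega
    obtain ⟨v, -, hv⟩ := SetLike.exists_of_lt hW_ne_top.lt_top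
    exact ⟨W ⊔ span K {v}, hNW.trans le_sup_left, by rw [finrank_sup_span_singleton hv, hW]⟩

namespace Matrix

variable {K : Type*} [Field K] {ι κ ν : Type*} [Fintype ι] [Fintype κ] [Fintype ν]

theorem mul_right_injective_of_mulVec_injective {α l m n : Type*} [NonUnitalNonAssocSemiring α]
    [Fintype m] {A : Matrix l m α} (hA : Injective A.mulVec) :
    Injective fun B : Matrix m n α => A * B :=
  fun _ _ h => ext_col fun j => hA congr(($h).col j)

theorem natCard_eq_pow {R : Type*} [Fintype R] :
    Nat.card (Matrix ι κ R) = Fintype.card R ^ (Fintype.card ι * Fintype.card κ) := by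
  rw [← Nat.card_congr (of : (ι → κ → R) ≃ _), Nat.card_fun, Nat.card_fun, ← pow_mul, mul_comm]
  simp only [Nat.card_eq_fintype_card]

theorem exists_mul_eq_of_rank_le {r : ℕ} (M : Matrix ι κ K) (hM : M.rank ≤ r)
    (hr : r ≤ Fintype.card ι) :
    ∃ (X : Matrix ι (Fin r) K) (Y : Matrix (Fin r) κ K), Injective X.mulVec ∧ X * Y = M := by
  classical
  obtain ⟨W, hMW, hW⟩ :=
    (LinearMap.range M.mulVecLin).exists_le_finrank_eq hM (by simpa using hr)
  let e : (Fin r → K) ≃ₗ[K] W := (finBasisOfFinrankEq K W hW).equivFun.symm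
  let f := W.subtype ∘ₗ e.toLinearMap
  let g := e.symm.toLinearMap ∘ₗ
    M.mulVecLin.codRestrict W fun v => hMW (LinearMap.mem_range_self _ v)
  refine ⟨LinearMap.toMatrix' f, LinearMap.toMatrix' g, ?_, ?_⟩
  · rw [show (LinearMap.toMatrix' f).mulVec = f from funext (LinearMap.toMatrix'_mulVec f)]
    exact W.injective_subtype.comp e.injective
  · rw [← LinearMap.toMatrix'_comp, ← LinearMap.toMatrix'_toLin' M]
    congr 1
    ext v
    simp [f, g]

variable [Fintype K]

theorem pow_le_card_rank_le_sum {r : ℕ} (hr : r ≤ Fintype.card ι) :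
    Fintype.card K ^ (Fintype.card ι * r + r * Fintype.card ν)
      ≤ Nat.card {M : Matrix ι (Fin r ⊕ ν) K // M.rank ≤ r} := by
  choose X Y hX hXY using fun A : Matrix ι (Fin r) K =>
    exists_mul_eq_of_rank_le A (A.rank_le_card_width.trans (by simp)) hr
  let J : Matrix ι (Fin r) K × Matrix (Fin r) ν K →
      {M : Matrix ι (Fin r ⊕ ν) K // M.rank ≤ r} :=
    fun p => ⟨fromCols p.1 (X p.1 * p.2), by
      rw [show fromCols p.1 (X p.1 * p.2) = X p.1 * fromCols (Y p.1) p.2 by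
        rw [mul_fromCols, hXY]]
      exact (rank_mul_le_left _ _).trans (rank_le_card_width _ |>.trans (by simp))⟩
  have hJ : Injective J := by
    rintro ⟨A, Z⟩ ⟨A', Z'⟩ h
    obtain ⟨rfl, hZ⟩ := fromCols_inj (congrArg Subtype.val h)
    exact Prod.ext rfl (mul_right_injective_of_mulVec_injective (hX A) hZ)
  calc _ = Nat.card (Matrix ι (Fin r) K × Matrix (Fin r) ν K) := by
        simp [Nat.card_prod, natCard_eq_pow, pow_add]
    _ ≤ _ := Nat.card_le_card_of_injective J hJ

theorem pow_le_card_rank_le {r : ℕ} (hrι : r ≤ Fintype.card ι) (hrκ : r ≤ Fintype.card κ) :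
    Fintype.card K ^ (r * (Fintype.card ι + Fintype.card κ - r))
      ≤ Nat.card {M : Matrix ι κ K // M.rank ≤ r} := by
  obtain ⟨d, hd⟩ := Nat.exists_eq_add_of_le hrκ
  let e : κ ≃ Fin r ⊕ Fin d := (Fintype.equivFinOfCardEq hd).trans finSumFinEquiv.symm
  have hexp : r * (Fintype.card ι + Fintype.card κ - r) = Fintype.card ι * r + r * d := by
    rw [hd, show Fintype.card ι + (r + d) - r = Fintype.card ι + d by omega]; ring
  calc _ = Fintype.card K ^ (Fintype.card ι * r + r * Fintype.card (Fin d)) := by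
        rw [hexp, Fintype.card_fin]
    _ ≤ Nat.card {M : Matrix ι (Fin r ⊕ Fin d) K // M.rank ≤ r} :=
        pow_le_card_rank_le_sum hrι
    _ = _ := Nat.card_congr <|
        (reindex (Equiv.refl ι) e.symm).subtypeEquiv fun M => by rw [rank_reindex]

theorem card_rank_le_mul_card_GL_le {r : ℕ} (hr : r ≤ Fintype.card ι) :
    Nat.card {M : Matrix ι κ K // M.rank ≤ r} * Nat.card (GL (Fin r) K)
      ≤ Fintype.card K ^ (Fintype.card ι * r + r * Fintype.card κ) := by
  choose X Y hX hXY using fun M : {M : Matrix ι κ K // M.rank ≤ r} =>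
    exists_mul_eq_of_rank_le M.1 M.2 hr
  let J : {M : Matrix ι κ K // M.rank ≤ r} × GL (Fin r) K →
      Matrix ι (Fin r) K × Matrix (Fin r) κ K :=
    fun p => (X p.1 * (p.2 : Matrix (Fin r) (Fin r) K),
      ((p.2⁻¹ : GL (Fin r) K) : Matrix (Fin r) (Fin r) K) * Y p.1)
  have hJ_mul : ∀ p, (J p).1 * (J p).2 = p.1 := fun p => by
    simp only [J]
    rw [Matrix.mul_assoc, ← Matrix.mul_assoc (p.2 : Matrix (Fin r) (Fin r) K), Units.mul_inv,
      Matrix.one_mul, hXY]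
  have hJ : Injective J := by
    rintro ⟨M, G⟩ ⟨M', G'⟩ h
    obtain rfl : M = M' := Subtype.ext (by rw [← hJ_mul (M, G), ← hJ_mul (M', G'), h])
    exact Prod.ext rfl (Units.ext (mul_right_injective_of_mulVec_injective (hX M) congr(($h).1)))
  calc _ = Nat.card ({M : Matrix ι κ K // M.rank ≤ r} × GL (Fin r) K) := Nat.card_prod _ _ |>.symm
    _ ≤ Nat.card (Matrix ι (Fin r) K × Matrix (Fin r) κ K) := Nat.card_le_card_of_injective J hJ
    _ = _ := by simp [Nat.card_prod, natCard_eq_pow, pow_add]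

end Matrix

theorem card_rankq_ball_eq {Fq F : Type*} [Field Fq] [Field F] [Algebra Fq F] {m n : ℕ}
    (β : Basis (Fin m) Fq F) (a : Fin n → F) (τ : ℕ) :
    Nat.card {b : Fin n → F // rankq Fq F β (b - a) ≤ τ}
      = Nat.card {M : Matrix (Fin m) (Fin n) Fq // M.rank ≤ τ} :=
  Nat.card_congr <| Equiv.subtypeEquiv
    ((Equiv.subRight a).trans <| (Equiv.piCongrRight fun _ => β.equivFun.toEquiv).trans <|
      Matrix.of.trans (Matrix.transposeAddEquiv _ _ _).toEquiv)
    fun _ => Iff.rfl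

theorem prod_range_pow_sub_pow_eq {K : Type*} [Field K] {q : K} (hq : q ≠ 0) (n : ℕ) :
    ∏ i ∈ range n, (q ^ n - q ^ i) = q ^ (n * n) * ∏ j ∈ range n, (1 - q⁻¹ ^ (j + 1)) := by
  have hpow : (q ^ n) ^ n = ∏ _j ∈ range n, q ^ n := by rw [prod_const, card_range]
  rw [pow_mul, hpow, ← prod_mul_distrib, ← prod_range_reflect]
  refine prod_congr rfl fun j hj => ?_
  have hjn : j < n := mem_range.1 hj
  rw [mul_sub, mul_one, inv_pow, ← pow_sub₀ _ hq (by omega),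
    show n - (j + 1) = n - 1 - j by omega]

theorem Matrix.natCast_card_GL_field (K : Type*) [Field K] [Fintype K] (n : ℕ) :
    (Nat.card (GL (Fin n) K) : ℝ) = (Fintype.card K : ℝ) ^ (n * n)
      * ∏ j ∈ range n, (1 - (Fintype.card K : ℝ)⁻¹ ^ (j + 1)) := by
  have hq : 1 ≤ Fintype.card K := Fintype.card_pos
  rw [card_GL_field, Nat.cast_prod, ← prod_range_pow_sub_pow_eq (by positivity),
    ← Fin.prod_univ_eq_prod_range (fun i => (Fintype.card K : ℝ) ^ n - (Fintype.card K : ℝ) ^ i)]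
  refine prod_congr rfl fun i _ => ?_
  rw [Nat.cast_sub (Nat.pow_le_pow_right hq i.2.le), Nat.cast_pow, Nat.cast_pow]

namespace Real

variable {x : ℝ}

theorem summable_log_one_sub_pow_succ (hx0 : 0 ≤ x) (hx1 : x < 1) :
    Summable fun j : ℕ => log (1 - x ^ (j + 1)) := by
  have : Summable fun j : ℕ => -x ^ (j + 1) :=
    ((summable_geometric_of_lt_one hx0 hx1).mul_left x).neg.congr fun j => by ring
  simpa [sub_eq_add_neg] using summable_log_one_add_of_summable this

theorem one_sub_pow_succ_pos (hx0 : 0 ≤ x) (hx1 : x < 1) (j : ℕ) : 0 < 1 - x ^ (j + 1) :=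
  sub_pos.2 (pow_lt_one₀ hx0 hx1 j.succ_ne_zero)

theorem tprod_one_sub_pow_succ_eq_exp (hx0 : 0 ≤ x) (hx1 : x < 1) :
    ∏' j : ℕ, (1 - x ^ (j + 1)) = exp (∑' j : ℕ, log (1 - x ^ (j + 1))) :=
  (rexp_tsum_eq_tprod (one_sub_pow_succ_pos hx0 hx1) (summable_log_one_sub_pow_succ hx0 hx1)).symm

theorem tprod_one_sub_pow_succ_pos (hx0 : 0 ≤ x) (hx1 : x < 1) :
    0 < ∏' j : ℕ, (1 - x ^ (j + 1)) := by
  rw [tprod_one_sub_pow_succ_eq_exp hx0 hx1]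
  exact exp_pos _

theorem tprod_one_sub_pow_succ_lt_prod_range (hx0 : 0 < x) (hx1 : x < 1) (n : ℕ) :
    ∏' j : ℕ, (1 - x ^ (j + 1)) < ∏ j ∈ range n, (1 - x ^ (j + 1)) := by
  have hpos := one_sub_pow_succ_pos hx0.le hx1
  have hsum := summable_log_one_sub_pow_succ hx0.le hx1
  have htail : ∑' i : ℕ, log (1 - x ^ (i + n + 1)) < 0 := by
    have hlt : ∀ j, log (1 - x ^ (j + 1)) < 0 := fun j =>
      log_neg (hpos j) (sub_lt_self 1 (pow_pos hx0 _))
    simpa using Summable.tsum_lt_tsum (i := 0) (fun i => (hlt _).le) (hlt _)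
      ((summable_nat_add_iff n).2 hsum) summable_zero
  rw [tprod_one_sub_pow_succ_eq_exp hx0.le hx1, ← hsum.sum_add_tsum_nat_add n,
    ← Finset.prod_congr rfl fun j _ => exp_log (hpos j), ← exp_sum]
  exact exp_lt_exp.2 (by linarith)

end Real

theorem Matrix.pow_mul_tprod_lt_card_GL_field (K : Type*) [Field K] [Fintype K] (n : ℕ) :
    (Fintype.card K : ℝ) ^ (n * n) * ∏' j : ℕ, (1 - (Fintype.card K : ℝ)⁻¹ ^ (j + 1))
      < Nat.card (GL (Fin n) K) := by
  have hq : (1 : ℝ) < Fintype.card K := Nat.one_lt_cast.2 Fintype.one_lt_card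
  rw [natCast_card_GL_field]
  gcongr
  exact Real.tprod_one_sub_pow_succ_lt_prod_range (by positivity) (inv_lt_one_of_one_lt₀ hq) n

theorem rank_metric_ball_size_bounds_general (Fq F : Type*) [Field Fq] [Fintype Fq]
    [Field F] [Algebra Fq F]
    (m n τ : ℕ) (hτ : τ ≤ min n m) (β : Module.Basis (Fin m) Fq F) (a : Fin n → F) :
    let q : ℝ := (Fintype.card Fq : ℝ)
    let Kq : ℝ := ∏' j : ℕ, (1 - q⁻¹ ^ (j + 1))
    let B : ℕ := Nat.card {b : Fin n → F // rankq Fq F β (b - a) ≤ τ}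
    q ^ (τ * (m + n - τ)) ≤ (B : ℝ) ∧ (B : ℝ) < Kq⁻¹ * q ^ (τ * (m + n - τ)) := by
  intro q Kq B
  have hτn : τ ≤ n := hτ.trans (min_le_left _ _)
  have hτm : τ ≤ m := hτ.trans (min_le_right _ _)
  have hB : B = Nat.card {M : Matrix (Fin m) (Fin n) Fq // M.rank ≤ τ} :=
    card_rankq_ball_eq β a τ
  have hlower : q ^ (τ * (m + n - τ)) ≤ B := by
    have := Matrix.pow_le_card_rank_le (K := Fq) (ι := Fin m) (κ := Fin n) (r := τ)
      (by simpa using hτm) (by simpa using hτn)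
    simp only [Fintype.card_fin] at this
    simp only [hB, q]
    exact_mod_cast this
  have hupper : (B : ℝ) * Nat.card (GL (Fin τ) Fq) ≤ q ^ (τ * (m + n - τ)) * q ^ (τ * τ) := by
    have := Matrix.card_rank_le_mul_card_GL_le (K := Fq) (ι := Fin m) (κ := Fin n) (r := τ)
      (by simpa using hτm)
    rw [← pow_add, show τ * (m + n - τ) + τ * τ = m * τ + τ * n by
      rw [← mul_add, Nat.sub_add_cancel (by omega)]; ring, hB]
    simp only [Fintype.card_fin, q] at this ⊢
    exact_mod_cast this
  have hGL := Matrix.pow_mul_tprod_lt_card_GL_field Fq τ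
  have hq : 1 < q := Nat.one_lt_cast.2 Fintype.one_lt_card
  have hK0 : 0 < Kq := Real.tprod_one_sub_pow_succ_pos (by positivity) (inv_lt_one_of_one_lt₀ hq)
  have hB0 : (0 : ℝ) < B := (pow_pos (by positivity) _).trans_le hlower
  refine ⟨hlower, ?_⟩
  rw [inv_mul_eq_div, lt_div_iff₀ hK0]
  refine lt_of_mul_lt_mul_right ?_ (pow_nonneg (by positivity : (0 : ℝ) ≤ q) (τ * τ))
  calc (B : ℝ) * Kq * q ^ (τ * τ) = B * (q ^ (τ * τ) * Kq) := by ring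
    _ < B * Nat.card (GL (Fin τ) Fq) := by gcongr
    _ ≤ _ := hupper

/-- For `0 ≤ τ ≤ min{n,m}`, the ball of rank radius `τ` in `F_{q^m}^n` satisfies
`q^{τ(m+n−τ)} ≤ |B_τ| < K_q⁻¹ · q^{τ(m+n−τ)}` where `K_q = Π_{j=1}^{∞} (1 − q^{-j})`. -/
theorem rank_metric_ball_size_bounds (Fq F : Type*) [Field Fq] [Fintype Fq]
    [Field F] [Fintype F] [Algebra Fq F]
    (m n τ : ℕ) (hτ : τ ≤ min n m) (β : Module.Basis (Fin m) Fq F) (a : Fin n → F) :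
    let q : ℝ := (Fintype.card Fq : ℝ)
    let Kq : ℝ := ∏' j : ℕ, (1 - q⁻¹ ^ (j + 1))
    let B : ℕ := Nat.card {b : Fin n → F // rankq Fq F β (b - a) ≤ τ}
    q ^ (τ * (m + n - τ)) ≤ (B : ℝ) ∧ (B : ℝ) < Kq⁻¹ * q ^ (τ * (m + n - τ)) :=
  rank_metric_ball_size_bounds_general Fq F m n τ hτ β a
end

section
/- Singleton bound in the rank metric: any code C ⊆ F_{q^m}^n with minimum rank distance d satisfies |C| ≤ q^{max{n,m}·(min{n,m} − d + 1)}. -/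
/-!
Expanding codewords in the basis `β` turns `C` into a set of `m × n` matrices over `F_q` whose
pairwise differences have rank at least `d ≥ 1`. Two distinct codewords cannot agree outside some
`d - 1` fixed columns, since their difference would then have rank at most `d - 1`; so deleting
those columns is injective on the code and `|C| ≤ q^{m (n - d + 1)}`. Deleting rows instead gives
`|C| ≤ q^{n (m - d + 1)}`, and the stated bound is whichever of the two matches `n ≤ m` or `m ≤ n`.
-/

namespace Module.Basis

variable {ι ι' R M : Type*} [CommRing R] [AddCommGroup M] [Module R M]

theorem toMatrix_sub (e : Basis ι R M) (v w : ι' → M) :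
    e.toMatrix (v - w) = e.toMatrix v - e.toMatrix w := by
  ext
  simp [toMatrix_apply]

theorem toMatrix_injective (e : Basis ι R M) :
    Function.Injective (e.toMatrix : (ι' → M) → Matrix ι ι' R) := fun _ _ h =>
  funext fun j => e.repr.injective (Finsupp.ext fun i => congrFun (congrFun h i) j)

end Module.Basis

namespace Matrix

variable {K m n : Type*} [Field K] [Fintype n]

theorem rank_le_card_of_col_eq_zero (M : Matrix m n K) (s : Finset n)
    (h : ∀ j ∉ s, M.col j = 0) : M.rank ≤ s.card := by
  classical
  calc M.rank = Module.finrank K (Submodule.span K (Set.range M.col)) :=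
        M.rank_eq_finrank_span_cols
    _ ≤ Module.finrank K (Submodule.span K (s.image M.col : Set (m → K))) := by
        refine Submodule.finrank_mono (Submodule.span_le.2 ?_)
        rintro _ ⟨j, rfl⟩
        by_cases hj : j ∈ s
        · exact Submodule.subset_span (Finset.mem_image_of_mem _ hj)
        · rw [h j hj]
          exact zero_mem _
    _ ≤ (s.image M.col).card := finrank_span_finset_le_card _
    _ ≤ s.card := Finset.card_image_le

theorem rank_pos_of_ne_zero {M : Matrix m n K} (hM : M ≠ 0) : 0 < M.rank := by
  by_contra! h0
  have := FiniteDimensional.span_of_finite K (Set.finite_range M.col)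
  rw [rank_eq_finrank_span_cols, Nat.le_zero, Submodule.finrank_eq_zero,
    Submodule.span_eq_bot] at h0
  exact hM (funext fun i => funext fun j => congrFun (h0 _ ⟨j, rfl⟩) i)

variable [Fintype K] [Fintype m]

theorem card_le_of_card_lt_rank_sub (S : Set (Matrix m n K)) (s : Finset n)
    (hS : ∀ A ∈ S, ∀ B ∈ S, A ≠ B → s.card < (A - B).rank) :
    Nat.card S ≤ Fintype.card K ^ (Fintype.card m * (Fintype.card n - s.card)) := by
  classical
  let puncture : Matrix m n K → Matrix m ↥sᶜ K := fun A => A.submatrix id (↑)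
  have hinj : S.InjOn puncture := by
    intro A hA B hB hAB
    by_contra hne
    refine (hS A hA B hB hne).not_ge ((A - B).rank_le_card_of_col_eq_zero s fun j hj => ?_)
    ext i
    rw [col_apply, sub_apply, Pi.zero_apply, sub_eq_zero]
    exact congrFun (congrFun hAB i) ⟨j, Finset.mem_compl.2 hj⟩
  calc Nat.card S ≤ Nat.card (Matrix m ↥sᶜ K) := Nat.card_le_card_of_injective _ hinj.injective
    _ = _ := by simp [Matrix, Nat.card_eq_fintype_card, ← pow_mul, mul_comm]

theorem singleton_bound_cols (S : Set (Matrix m n K)) {d : ℕ} (hd : 0 < d)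
    (hdn : d ≤ Fintype.card n) (hS : ∀ A ∈ S, ∀ B ∈ S, A ≠ B → d ≤ (A - B).rank) :
    Nat.card S ≤ Fintype.card K ^ (Fintype.card m * (Fintype.card n - d + 1)) := by
  obtain ⟨s, -, hs⟩ := Finset.exists_subset_card_eq (s := (Finset.univ : Finset n)) (n := d - 1)
    (by rw [Finset.card_univ]; omega)
  have := card_le_of_card_lt_rank_sub S s fun A hA B hB hne => by
    have := hS A hA B hB hne
    omega
  convert this using 3
  omega

theorem singleton_bound_rows (S : Set (Matrix m n K)) {d : ℕ} (hd : 0 < d)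
    (hdm : d ≤ Fintype.card m) (hS : ∀ A ∈ S, ∀ B ∈ S, A ≠ B → d ≤ (A - B).rank) :
    Nat.card S ≤ Fintype.card K ^ (Fintype.card n * (Fintype.card m - d + 1)) := by
  rw [← Nat.card_image_of_injective transpose_injective]
  refine singleton_bound_cols _ hd hdm ?_
  rintro _ ⟨A, hA, rfl⟩ _ ⟨B, hB, rfl⟩ hne
  rw [← transpose_sub, rank_transpose]
  exact hS A hA B hB (by rintro rfl; exact hne rfl)

end Matrix

theorem singleton_bound_rank_metric_general (Fq F : Type*) [Field Fq] [Fintype Fq]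
    [Field F] [Algebra Fq F]
    (m n : ℕ) (β : Module.Basis (Fin m) Fq F) (C : Set (Fin n → F)) (d : ℕ)
    (hmin : IsLeast {r : ℕ | ∃ a ∈ C, ∃ b ∈ C, a ≠ b ∧ rankq Fq F β (a - b) = r} d) :
    Nat.card C ≤ (Fintype.card Fq) ^ (max n m * (min n m - d + 1)) := by
  obtain ⟨⟨a, ha, b, hb, hab, rfl⟩, hleast⟩ := hmin
  have hrankq (v : Fin n → F) : rankq Fq F β v = (β.toMatrix v).rank := rfl
  have hS : ∀ A ∈ β.toMatrix '' C, ∀ B ∈ β.toMatrix '' C, A ≠ B →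
      rankq Fq F β (a - b) ≤ (A - B).rank := by
    rintro _ ⟨x, hx, rfl⟩ _ ⟨y, hy, rfl⟩ hne
    rw [← β.toMatrix_sub, ← hrankq]
    exact hleast ⟨x, hx, y, hy, ne_of_apply_ne _ hne, rfl⟩
  have hpos : 0 < rankq Fq F β (a - b) := by
    rw [hrankq, β.toMatrix_sub]
    exact Matrix.rank_pos_of_ne_zero (sub_ne_zero.2 (β.toMatrix_injective.ne hab))
  rw [← Nat.card_image_of_injective β.toMatrix_injective]
  rcases le_total n m with hnm | hmn
  · rw [max_eq_right hnm, min_eq_left hnm]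
    simpa using Matrix.singleton_bound_cols _ hpos
      (by rw [Fintype.card_fin]; exact Matrix.rank_le_width _) hS
  · rw [max_eq_left hmn, min_eq_right hmn]
    simpa using Matrix.singleton_bound_rows _ hpos
      (by rw [Fintype.card_fin]; exact Matrix.rank_le_height _) hS

/-- Singleton bound in the rank metric: any code `C ⊆ F_{q^m}^n` with minimum
rank distance `d` satisfies `|C| ≤ q^{max{n,m}·(min{n,m} − d + 1)}`. -/
theorem singleton_bound_rank_metric (Fq F : Type*) [Field Fq] [Fintype Fq]
    [Field F] [Fintype F] [Algebra Fq F]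
    (m n : ℕ) (β : Module.Basis (Fin m) Fq F) (C : Set (Fin n → F)) (d : ℕ)
    (hmin : IsLeast {r : ℕ | ∃ a ∈ C, ∃ b ∈ C, a ≠ b ∧ rankq Fq F β (a - b) = r} d) :
    Nat.card C ≤ (Fintype.card Fq) ^ (max n m * (min n m - d + 1)) :=
  singleton_bound_rank_metric_general Fq F m n β C d hmin
end

section
/- Gilbert–Varshamov bound in the rank metric: there exists a code C ⊆ F_{q^m}^n of minimum rank distance at least d with |C| ≥ q^{mn} / |B_{d−1}|, where |B_{d−1}| is the size of a ball of rank radius d−1. -/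
open Finset

section WeightedCode

variable {G : Type*} [AddCommGroup G] (w : G → ℕ)

def HasMinDist (d : ℕ) (C : Set G) : Prop :=
  ∀ a ∈ C, ∀ b ∈ C, a ≠ b → d ≤ w (a - b)

variable {w}

theorem HasMinDist.insert (hneg : ∀ x, w (-x) = w x) {d : ℕ} {C : Set G}
    (hC : HasMinDist w d C) {x : G} (hx : ∀ c ∈ C, d ≤ w (x - c)) :
    HasMinDist w d (insert x C) := by
  rintro a (rfl | ha) b (rfl | hb) hab
  · exact absurd rfl hab
  · exact hx b hb
  · rw [← neg_sub, hneg]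
    exact hx a ha
  · exact hC a ha b hb hab

theorem exists_hasMinDist_covering [Finite G] (hw0 : w 0 = 0) (hneg : ∀ x, w (-x) = w x)
    (d : ℕ) : ∃ C : Finset G, HasMinDist w d C ∧ ∀ x, ∃ c ∈ C, w (x - c) ≤ d - 1 := by
  classical
  have := Fintype.ofFinite G
  obtain ⟨C, hCcode, hCmax⟩ :=
    (univ.filter fun C : Finset G => HasMinDist w d C).exists_max_image card
      ⟨∅, by simp [HasMinDist]⟩
  rw [mem_filter] at hCcode
  refine ⟨C, hCcode.2, fun x => ?_⟩
  by_contra! hfar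
  have hxC : x ∉ C := fun hx => by simpa [hw0] using hfar x hx
  have hins : HasMinDist w d (insert x C : Finset G) := by
    rw [coe_insert]
    exact hCcode.2.insert hneg fun c hc => by have := hfar c hc; omega
  have := hCmax _ (mem_filter.2 ⟨mem_univ _, hins⟩)
  rw [card_insert_of_notMem hxC] at this
  omega

theorem card_le_card_mul_card_ball_of_covering [Fintype G] {C : Finset G} {r : ℕ}
    (hC : ∀ x, ∃ c ∈ C, w (x - c) ≤ r) :
    Fintype.card G ≤ #C * Nat.card {x : G // w x ≤ r} := by
  classical
  choose center hcenter_mem hcenter_near using hC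
  have hball (c : G) : #{x | center x = c} ≤ Nat.card {x : G // w x ≤ r} := by
    rw [Nat.card_eq_fintype_card, Fintype.card_subtype]
    calc #{x | center x = c} ≤ #((univ.filter fun x => w x ≤ r).map (addRightEmbedding c)) := by
          refine card_le_card fun x hx => ?_
          rw [mem_filter] at hx
          refine mem_map.2 ⟨x - c, ?_, sub_add_cancel x c⟩
          simpa [← hx.2] using hcenter_near x
      _ = #{x | w x ≤ r} := card_map _
  rw [mul_comm, ← card_univ]
  exact card_le_mul_card_image_of_maps_to (fun x _ => hcenter_mem x) _ fun c _ => hball c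

theorem exists_hasMinDist_card_le_card_mul_card_ball [Fintype G] (hw0 : w 0 = 0)
    (hneg : ∀ x, w (-x) = w x) (d : ℕ) :
    ∃ C : Finset G, HasMinDist w d C ∧
      Fintype.card G ≤ #C * Nat.card {x : G // w x ≤ d - 1} := by
  obtain ⟨C, hC, hcover⟩ := exists_hasMinDist_covering hw0 hneg d
  exact ⟨C, hC, card_le_card_mul_card_ball_of_covering hcover⟩

end WeightedCode

section RankMetric

variable {Fq F : Type*} [Field Fq] [Field F] [Algebra Fq F] {m n : ℕ}
  (β : Module.Basis (Fin m) Fq F)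

theorem rankq_zero : rankq Fq F β (0 : Fin n → F) = 0 := by
  simp only [rankq, Pi.zero_apply, map_zero, Finsupp.coe_zero]
  exact Matrix.rank_zero

theorem rankq_smul {c : Fq} (hc : c ≠ 0) (a : Fin n → F) :
    rankq Fq F β (c • a) = rankq Fq F β a := by
  have hmat : (Matrix.of fun i j => β.repr ((c • a) j) i) =
      c • Matrix.of fun i j => β.repr (a j) i := by
    ext i j
    simp
  rw [rankq, hmat, Matrix.rank_smul_of_mem_nonZeroDivisors _ (mem_nonZeroDivisors_of_ne_zero hc),
    rankq]

theorem rankq_neg (a : Fin n → F) : rankq Fq F β (-a) = rankq Fq F β a := by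
  rw [← neg_one_smul Fq a, rankq_smul β (neg_ne_zero.2 one_ne_zero)]

end RankMetric

theorem gilbert_varshamov_bound_rank_metric_general (Fq F : Type*) [Field Fq] [Fintype Fq]
    [Field F] [Fintype F] [Algebra Fq F]
    (m n d : ℕ) (β : Module.Basis (Fin m) Fq F) :
    ∃ C : Set (Fin n → F),
      (∀ a ∈ C, ∀ b ∈ C, a ≠ b → d ≤ rankq Fq F β (a - b)) ∧
      ((Fintype.card Fq : ℝ) ^ (m * n)) /
          (Nat.card {b : Fin n → F // rankq Fq F β b ≤ d - 1} : ℝ) ≤ (Nat.card C : ℝ) := by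
  obtain ⟨C, hC, hcard⟩ :=
    exists_hasMinDist_card_le_card_mul_card_ball (rankq_zero (n := n) β) (rankq_neg β) d
  refine ⟨C, hC, ?_⟩
  have hball_pos : 0 < Nat.card {b : Fin n → F // rankq Fq F β b ≤ d - 1} :=
    Nat.card_pos_iff.2 ⟨⟨⟨0, by simp [rankq_zero]⟩⟩, inferInstance⟩
  have hspace : Fintype.card (Fin n → F) = Fintype.card Fq ^ (m * n) := by
    rw [Fintype.card_fun, Module.card_fintype β, Fintype.card_fin, Fintype.card_fin, ← pow_mul]
  rw [div_le_iff₀ (by exact_mod_cast hball_pos), Nat.card_coe_set_eq, Set.ncard_coe_finset]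
  exact_mod_cast hspace ▸ hcard

/-- Gilbert–Varshamov bound in the rank metric: there exists a code
`C ⊆ F_{q^m}^n` of minimum rank distance at least `d` with `|C| ≥ q^{mn} / |B_{d-1}|`,
where `B_{d-1}` is a ball of rank radius `d−1` (centered at `0`, size being independent
of the center). -/
theorem gilbert_varshamov_bound_rank_metric (Fq F : Type*) [Field Fq] [Fintype Fq]
    [Field F] [Fintype F] [Algebra Fq F]
    (m n d : ℕ) (hd : 1 ≤ d) (β : Module.Basis (Fin m) Fq F) :
    ∃ C : Set (Fin n → F),
      (∀ a ∈ C, ∀ b ∈ C, a ≠ b → d ≤ rankq Fq F β (a - b)) ∧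
      ((Fintype.card Fq : ℝ) ^ (m * n)) /
          (Nat.card {b : Fin n → F // rankq Fq F β b ≤ d - 1} : ℝ) ≤ (Nat.card C : ℝ) :=
  gilbert_varshamov_bound_rank_metric_general Fq F m n d β
end

section
/- Every codeword of a Gabidulin code Gab(n,k) over F_{q^m} (with n ≤ m), given by evaluating a nonzero linearized polynomial f of q-degree less than k at F_q-linearly independent points g_0,...,g_{n-1}, has rank weight at least n − k + 1; hence the minimum rank distance of Gab(n,k) is exactly d = n − k + 1. -/
open Module Submodule Polynomial FiniteField

section LinearizedPolynomial

variable (Fq : Type*) {F : Type*} [Field Fq] [Fintype Fq] [CommRing F] {k : ℕ}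

local notation "q" => Fintype.card Fq

noncomputable def linearizedPoly (f : Fin k → F) : F[X] := ∑ i : Fin k, C (f i) * X ^ q ^ (i : ℕ)

theorem coeff_linearizedPoly_card_pow (f : Fin k → F) (i : Fin k) :
    (linearizedPoly Fq f).coeff (q ^ (i : ℕ)) = f i := by
  classical
  have hinj : Function.Injective (q ^ · : ℕ → ℕ) := Nat.pow_right_injective Fintype.one_lt_card
  simp [linearizedPoly, coeff_X_pow, hinj.eq_iff, Fin.val_inj]

theorem linearizedPoly_ne_zero {f : Fin k → F} (hf : f ≠ 0) : linearizedPoly Fq f ≠ 0 := by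
  obtain ⟨i, hi⟩ := Function.ne_iff.mp hf
  exact fun h => hi (by rw [← coeff_linearizedPoly_card_pow Fq f i, h, coeff_zero]; rfl)

theorem natDegree_linearizedPoly_le (f : Fin k → F) :
    (linearizedPoly Fq f).natDegree ≤ q ^ (k - 1) :=
  natDegree_sum_le_of_forall_le _ _ fun i _ =>
    (natDegree_C_mul_X_pow_le _ _).trans (Nat.pow_le_pow_right Fintype.card_pos (by omega))

variable [Algebra Fq F]

theorem frobeniusAlgHom_pow_apply (i : ℕ) (x : F) :
    (frobeniusAlgHom Fq F ^ i) x = x ^ q ^ i := by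
  rw [AlgHom.coe_pow, coe_frobeniusAlgHom, pow_iterate]

noncomputable def linearizedMap (f : Fin k → F) : F →ₗ[Fq] F where
  toFun x := ∑ i : Fin k, f i * x ^ q ^ (i : ℕ)
  map_add' x y := by
    simp only [← frobeniusAlgHom_pow_apply, map_add, mul_add, Finset.sum_add_distrib]
  map_smul' c x := by
    simp only [← frobeniusAlgHom_pow_apply, map_smul, mul_smul_comm, Finset.smul_sum,
      RingHom.id_apply]

theorem linearizedMap_apply (f : Fin k → F) (x : F) :
    linearizedMap Fq f x = ∑ i : Fin k, f i * x ^ q ^ (i : ℕ) := rfl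

theorem eval_linearizedPoly (f : Fin k → F) (x : F) :
    (linearizedPoly Fq f).eval x = linearizedMap Fq f x := by
  simp [linearizedPoly, linearizedMap_apply, eval_finsetSum]

end LinearizedPolynomial

section LinearizedMapOverField

variable (Fq : Type*) {F : Type*} [Field Fq] [Fintype Fq] [Field F] [Algebra Fq F] {k : ℕ}

local notation "q" => Fintype.card Fq

theorem finrank_ker_linearizedMap_le [Finite F] {f : Fin k → F} (hf : f ≠ 0) :
    finrank Fq (LinearMap.ker (linearizedMap Fq f)) ≤ k - 1 := by
  classical
  have := Fintype.ofFinite F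
  rw [← Nat.pow_le_pow_iff_right (Fintype.one_lt_card (α := Fq)), ← card_eq_pow_finrank]
  calc Fintype.card (LinearMap.ker (linearizedMap Fq f))
      = (LinearMap.ker (linearizedMap Fq f) : Set F).toFinset.card := (Set.toFinset_card _).symm
    _ ≤ (linearizedPoly Fq f).natDegree := card_le_degree_of_subset_roots fun x hx => by
        simpa [mem_roots (linearizedPoly_ne_zero Fq hf), eval_linearizedPoly] using hx
    _ ≤ q ^ (k - 1) := natDegree_linearizedPoly_le Fq f

theorem exists_ne_zero_forall_linearizedMap_eq_zero {r : ℕ} (hrk : r < k) (x : Fin r → F) :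
    ∃ f : Fin k → F, f ≠ 0 ∧ ∀ j, linearizedMap Fq f (x j) = 0 := by
  have hdep : ¬ LinearIndependent F fun (i : Fin k) (j : Fin r) => x j ^ q ^ (i : ℕ) := fun h => by
    have := h.fintype_card_le_finrank
    simp only [Fintype.card_fin, finrank_fin_fun] at this
    omega
  obtain ⟨c, hc, i, hi⟩ := Fintype.not_linearIndependent_iff.mp hdep
  exact ⟨c, Function.ne_iff.mpr ⟨i, hi⟩, fun j => by
    simpa [linearizedMap_apply, mul_comm] using congrFun hc j⟩

end LinearizedMapOverField

theorem LinearMap.finrank_map_add_finrank_ker_inf {K V W : Type*} [DivisionRing K]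
    [AddCommGroup V] [Module K V] [AddCommGroup W] [Module K W] (L : V →ₗ[K] W)
    (p : Submodule K V) [FiniteDimensional K p] :
    finrank K (p.map L) + finrank K (LinearMap.ker L ⊓ p : Submodule K V) = finrank K p := by
  rw [← L.range_domRestrict, ← (L.domRestrict p).finrank_range_add_finrank_ker, L.ker_domRestrict]
  congr 1
  exact (LinearEquiv.finrank_eq (Submodule.comapSubtypeEquivOfLe inf_le_right)).symm.trans
    (by rw [Submodule.comap_inf, Submodule.comap_subtype_self, inf_top_eq])

theorem LinearMap.card_le_finrank_ker_inf_span {K V W ι ι' : Type*} [DivisionRing K]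
    [AddCommGroup V] [Module K V] [AddCommGroup W] [Module K W] [Finite ι] [Fintype ι']
    {g : ι → V} (hg : LinearIndependent K g) {s : ι' → ι} (hs : Function.Injective s)
    {L : V →ₗ[K] W} (hL : ∀ j, L (g (s j)) = 0) :
    Fintype.card ι' ≤ finrank K (LinearMap.ker L ⊓ span K (Set.range g) : Submodule K V) := by
  have := FiniteDimensional.span_of_finite K (Set.finite_range g)
  rw [← finrank_span_eq_card (hg.comp s hs)]
  exact Submodule.finrank_mono <| le_inf (span_le.2 (Set.range_subset_iff.2 hL))
    (span_mono (Set.range_comp_subset_range s g))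

section RankWeight

variable {Fq F : Type*} [Field Fq] [Field F] [Algebra Fq F] {m n : ℕ}

theorem rankq_eq_finrank_span (β : Basis (Fin m) Fq F) (a : Fin n → F) :
    rankq Fq F β a = finrank Fq (span Fq (Set.range a)) := by
  rw [rankq, Matrix.rank_eq_finrank_span_cols]
  have hcols : (Matrix.of fun (i : Fin m) (j : Fin n) => β.repr (a j) i).col = β.equivFun ∘ a :=
    rfl
  rw [hcols, Set.range_comp, ← LinearEquiv.coe_toLinearMap, ← map_span, LinearEquiv.finrank_map_eq]

theorem rankq_comp_add_finrank_ker_inf_span (β : Basis (Fin m) Fq F) {g : Fin n → F}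
    (hg : LinearIndependent Fq g) (L : F →ₗ[Fq] F) :
    rankq Fq F β (fun j => L (g j))
      + finrank Fq (LinearMap.ker L ⊓ span Fq (Set.range g) : Submodule Fq F) = n := by
  have := FiniteDimensional.span_of_finite Fq (Set.finite_range g)
  rw [rankq_eq_finrank_span, Set.range_comp', ← map_span, L.finrank_map_add_finrank_ker_inf,
    finrank_span_eq_card hg, Fintype.card_fin]

end RankWeight

theorem gabidulin_minimum_rank_distance_general (Fq F : Type*) [Field Fq] [Fintype Fq]
    [Field F] [Algebra Fq F]
    (m n k : ℕ) (hk : 0 < k) (hkn : k < n)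
    (β : Module.Basis (Fin m) Fq F) (g : Fin n → F) (hg : LinearIndependent Fq g) :
    (∀ f : Fin k → F, f ≠ 0 →
        n - k + 1 ≤
          rankq Fq F β (fun j => ∑ i : Fin k, f i * g j ^ (Fintype.card Fq) ^ (i : ℕ))) ∧
    (∃ f : Fin k → F, f ≠ 0 ∧
        rankq Fq F β (fun j => ∑ i : Fin k, f i * g j ^ (Fintype.card Fq) ^ (i : ℕ)) =
          n - k + 1) := by
  simp only [← linearizedMap_apply]
  have : Module.Finite Fq F := .of_basis β
  have : Finite F := Module.finite_of_finite Fq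
  have hrank (f : Fin k → F) := rankq_comp_add_finrank_ker_inf_span β hg (linearizedMap Fq f)
  have hker {f : Fin k → F} (hf : f ≠ 0) :
      finrank Fq (LinearMap.ker (linearizedMap Fq f) ⊓ span Fq (Set.range g) : Submodule Fq F)
        ≤ k - 1 :=
    (Submodule.finrank_mono inf_le_left).trans (finrank_ker_linearizedMap_le Fq hf)
  refine ⟨fun f hf => ?_, ?_⟩
  · have := hrank f
    have := hker hf
    omega
  · obtain ⟨f, hf, hvanish⟩ := exists_ne_zero_forall_linearizedMap_eq_zero Fq
      (Nat.sub_lt hk one_pos) (g ∘ Fin.castLE (by omega))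
    have hle := (linearizedMap Fq f).card_le_finrank_ker_inf_span hg
      (Fin.castLE_injective _) hvanish
    rw [Fintype.card_fin] at hle
    have := hrank f
    have := hker hf
    exact ⟨f, hf, by omega⟩

/-- Every codeword of the Gabidulin code `Gab(n,k)` over `F_{q^m}` (`k < n ≤ m`),
obtained by evaluating a nonzero linearized polynomial `f` of q-degree `< k` at `F_q`-linearly
independent points `g_0, ..., g_{n-1}`, has rank weight at least `n − k + 1`; and this bound is
attained, so the minimum rank distance of `Gab(n,k)` is exactly `d = n − k + 1`. -/
theorem gabidulin_minimum_rank_distance (Fq F : Type*) [Field Fq] [Fintype Fq]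
    [Field F] [Fintype F] [Algebra Fq F]
    (m n k : ℕ) (hk : 0 < k) (hkn : k < n) (hnm : n ≤ m)
    (β : Module.Basis (Fin m) Fq F) (g : Fin n → F) (hg : LinearIndependent Fq g) :
    (∀ f : Fin k → F, f ≠ 0 →
        n - k + 1 ≤
          rankq Fq F β (fun j => ∑ i : Fin k, f i * g j ^ (Fintype.card Fq) ^ (i : ℕ))) ∧
    (∃ f : Fin k → F, f ≠ 0 ∧
        rankq Fq F β (fun j => ∑ i : Fin k, f i * g j ^ (Fintype.card Fq) ^ (i : ℕ)) =
          n - k + 1) :=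
  gabidulin_minimum_rank_distance_general Fq F m n k hk hkn β g hg
end

section
/- Key equation for Gabidulin decoding: let r = c + e in F_{q^m}^n with c in a Gabidulin code of dimension k, rank(e) = t < n−k, syndrome polynomial s(x) = Σ_{i=0}^{n−k−1} s_i x^{q^i} where s = r·H^T for the Moore parity-check matrix H, and Λ(x) the minimal subspace polynomial (of q-degree t) of an F_q-basis a_0,...,a_{t−1} of the column space of e. Then the linearized composition Λ(s(x)) has all coefficients of x^{q^i} equal to zero for t ≤ i ≤ n−k−1; i.e., Λ(s(x)) ≡ Ω(x) mod x^{q^{n−k}} for some linearized Ω of q-degree < t. -/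
/-- Key equation for decoding Gabidulin codes. Let `r = c + e` where `c` lies
in the kernel of the Moore parity-check matrix built from `h` (i.e. `Σ_j c_j h_j^{q^i} = 0`
for `0 ≤ i < n−k`), and `e = a·B` with `a ∈ F_{q^m}^t` an `F_q`-basis of the column space of
`e` (so `a` is `F_q`-linearly independent and `B ∈ F_q^{t×n}` has rank `t`), `t < n − k`.
Let `s_i = Σ_j r_j h_j^{q^i}` be the syndrome and `Λ(x) = Σ_j Λ_j x^{q^j}` the minimal
subspace polynomial of `⟨a_0,...,a_{t−1}⟩` (q-degree `t`, vanishing on the span). Then the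
coefficient of `x^{q^i}` in the linearized composition `Λ(s(x))`, namely
`Σ_{j=0}^{t} Λ_j s_{i−j}^{q^j}`, vanishes for all `t ≤ i ≤ n−k−1`; i.e.
`Λ(s(x)) ≡ Ω(x) mod x^{q^{n−k}}` with `deg_q Ω < t`. -/
theorem gabidulin_key_equation (Fq F : Type*) [Field Fq] [Fintype Fq]
    [Field F] [Fintype F] [Algebra Fq F]
    (n k t : ℕ) (ht : t < n - k)
    (h c e r : Fin n → F)
    (a : Fin t → F) (ha : LinearIndependent Fq a)
    (B : Fin t → Fin n → Fq) (hB : (Matrix.of B).rank = t)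
    (he : e = fun j => ∑ l : Fin t, a l * algebraMap Fq F (B l j))
    (hc : ∀ i : Fin (n - k), ∑ j : Fin n, c j * h j ^ (Fintype.card Fq) ^ (i : ℕ) = 0)
    (hr : r = c + e)
    (s : Fin (n - k) → F)
    (hs : ∀ i : Fin (n - k), s i = ∑ j : Fin n, r j * h j ^ (Fintype.card Fq) ^ (i : ℕ))
    (Λ : Fin (t + 1) → F)
    (hΛtop : Λ (Fin.last t) ≠ 0)
    (hΛ : ∀ u ∈ Submodule.span Fq (Set.range a),
      ∑ j : Fin (t + 1), Λ j * u ^ (Fintype.card Fq) ^ (j : ℕ) = 0) :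
    ∀ i : Fin (n - k), t ≤ (i : ℕ) →
      ∑ j : Fin (t + 1),
        Λ j * (s ⟨(i : ℕ) - (j : ℕ), lt_of_le_of_lt (Nat.sub_le _ _) i.isLt⟩) ^
          (Fintype.card Fq) ^ (j : ℕ) = 0 := by

  intro i hi
  classical
  set q := Fintype.card Fq with hq
  obtain ⟨f, hp, hcard⟩ := FiniteField.card Fq (ringChar Fq)
  haveI : CharP F (ringChar Fq) :=
    charP_of_injective_algebraMap (algebraMap Fq F).injective _
  haveI : ExpChar F (ringChar Fq) := ExpChar.prime hp
  -- q-power maps are additive on F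
  have sum_frob : ∀ (m : ℕ) {ι : Type} (S : Finset ι) (g : ι → F),
      (∑ x ∈ S, g x) ^ q ^ m = ∑ x ∈ S, g x ^ q ^ m := by
    intro m ι S g
    rw [hq, hcard, ← pow_mul]
    exact sum_pow_char_pow (ringChar Fq) (↑f * m) S g
  -- elements of Fq are fixed by q-power maps
  have map_frob : ∀ (m : ℕ) (b : Fq), (algebraMap Fq F b) ^ q ^ m = algebraMap Fq F b := by
    intro m b
    rw [← map_pow, FiniteField.pow_card_pow]
  set d : Fin t → F := fun l => ∑ j : Fin n, algebraMap Fq F (B l j) * h j with hd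
  -- syndrome formula
  have key : ∀ ii : Fin (n - k), s ii = ∑ l : Fin t, a l * d l ^ q ^ (ii : ℕ) := by
    intro ii
    have hdl : ∀ l : Fin t,
        d l ^ q ^ (ii : ℕ) = ∑ j : Fin n, algebraMap Fq F (B l j) * h j ^ q ^ (ii : ℕ) := by
      intro l
      rw [hd, sum_frob]
      exact Finset.sum_congr rfl fun j _ => by rw [mul_pow, map_frob]
    calc s ii = ∑ j : Fin n, (c j + e j) * h j ^ q ^ (ii : ℕ) := by rw [hs, hr]; rfl
      _ = (∑ j : Fin n, c j * h j ^ q ^ (ii : ℕ))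
          + ∑ j : Fin n, e j * h j ^ q ^ (ii : ℕ) := by
            rw [← Finset.sum_add_distrib]
            exact Finset.sum_congr rfl fun j _ => add_mul _ _ _
      _ = ∑ j : Fin n, e j * h j ^ q ^ (ii : ℕ) := by rw [hc ii, zero_add]
      _ = ∑ j : Fin n, ∑ l : Fin t,
            a l * (algebraMap Fq F (B l j) * h j ^ q ^ (ii : ℕ)) := by
            refine Finset.sum_congr rfl fun j _ => ?_
            rw [he]
            rw [Finset.sum_mul]
            exact Finset.sum_congr rfl fun l _ => by ring
      _ = ∑ l : Fin t, a l * d l ^ q ^ (ii : ℕ) := by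
            rw [Finset.sum_comm]
            refine Finset.sum_congr rfl fun l _ => ?_
            rw [hdl, Finset.mul_sum]
  calc ∑ j : Fin (t + 1),
        Λ j * (s ⟨(i : ℕ) - (j : ℕ), lt_of_le_of_lt (Nat.sub_le _ _) i.isLt⟩) ^ q ^ (j : ℕ)
      = ∑ j : Fin (t + 1), ∑ l : Fin t,
          Λ j * a l ^ q ^ (j : ℕ) * d l ^ q ^ (i : ℕ) := by
        refine Finset.sum_congr rfl fun j _ => ?_
        rw [key, sum_frob, Finset.mul_sum]
        refine Finset.sum_congr rfl fun l _ => ?_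
        have hji : (j : ℕ) ≤ (i : ℕ) := le_trans (Nat.lt_succ_iff.mp j.isLt) hi
        rw [mul_pow, ← pow_mul, ← pow_add, Nat.sub_add_cancel hji]
        ring
    _ = ∑ l : Fin t, (∑ j : Fin (t + 1), Λ j * a l ^ q ^ (j : ℕ)) * d l ^ q ^ (i : ℕ) := by
        rw [Finset.sum_comm]
        exact Finset.sum_congr rfl fun l _ => by rw [Finset.sum_mul]
    _ = 0 := by
        refine Finset.sum_eq_zero fun l _ => ?_
        rw [hΛ (a l) (Submodule.subset_span ⟨l, rfl⟩), zero_mul]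
end

section
/- If A ∈ F_q^{a×n} has rank a and B ∈ F_{q^m}^{b×n} is a parity-check matrix of an [n, n−b] MRD code with b ≤ n − a (so every nonzero vector in the F_{q^m}-row span of B has F_q-rank at least n − b + 1), then the stacked matrix [A; B] has F_{q^m}-rank a + b. -/
/-!
An `F_q`-matrix `A` of full row rank stays of full row rank over `F_{q^m}`, and every vector of
its `F_{q^m}`-row span is `u · A` for some `u`, so its coordinate matrix is `U · A` and has
`F_q`-rank at most `a`. Since `a ≤ n - b`, the MRD property forces the row spans of `A` and `B`
to meet only in `0`, so the rows of `[A; B]` are linearly independent.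
-/

namespace Matrix

variable {K : Type*} [Field K] {l m n : Type*} [Fintype l] [Fintype m] [Fintype n]

theorem linearIndependent_row_of_rank_eq {M : Matrix m n K} (h : M.rank = Fintype.card m) :
    LinearIndependent K M.row := by
  rw [linearIndependent_iff_card_eq_finrank_span, Set.finrank, ← rank_eq_finrank_span_row, h]

theorem rank_fromRows_of_disjoint {A : Matrix l n K} {B : Matrix m n K}
    (hA : LinearIndependent K A.row) (hB : LinearIndependent K B.row)
    (hAB : Disjoint (Submodule.span K (Set.range A.row)) (Submodule.span K (Set.range B.row))) :
    (fromRows A B).rank = Fintype.card l + Fintype.card m := by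
  rw [LinearIndependent.rank_matrix (M := fromRows A B) (hA.sum_type hB hAB), Fintype.card_sum]

end Matrix

section FieldExtension

variable {Fq F : Type*} [Field Fq] [Field F] [Algebra Fq F] {ι : Type*} {m n : ℕ}

theorem rankq_le_rank_of_mem_span_map [Fintype ι] (β : Module.Basis (Fin m) Fq F)
    (A : Matrix ι (Fin n) Fq) {w : Fin n → F}
    (hw : w ∈ Submodule.span F (Set.range (A.map (algebraMap Fq F)).row)) :
    rankq Fq F β w ≤ A.rank := by
  obtain ⟨x, rfl⟩ := (Submodule.mem_span_range_iff_exists_fun F).mp hw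
  have hcoord : (Matrix.of fun (k : Fin m) (j : Fin n) =>
      β.repr ((∑ i, x i • (A.map (algebraMap Fq F)).row i) j) k) =
      (Matrix.of fun (k : Fin m) (i : ι) => β.repr (x i) k) * A := by
    ext k j
    have hentry : (∑ i, x i • (A.map (algebraMap Fq F)).row i) j = ∑ i, A i j • x i := by
      simp [Finset.sum_apply, Algebra.smul_def, mul_comm]
    rw [Matrix.of_apply, hentry, map_sum]
    simp [Matrix.mul_apply, mul_comm]
  rw [rankq, hcoord]
  exact Matrix.rank_mul_le_right _ _

theorem linearIndependent_row_map_algebraMap {A : Matrix ι (Fin n) Fq}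
    (hA : LinearIndependent Fq A.row) :
    LinearIndependent F (A.map (algebraMap Fq F)).row :=
  linearIndependent_algebraMap_comp_iff.mpr hA

end FieldExtension

theorem stacked_mrd_parities_full_rank_general (Fq F : Type*) [Field Fq]
    [Field F] [Algebra Fq F]
    (m n a b : ℕ) (hb : b ≤ n - a)
    (β : Module.Basis (Fin m) Fq F)
    (A : Matrix (Fin a) (Fin n) Fq) (hA : A.rank = a)
    (B : Matrix (Fin b) (Fin n) F) (hBrank : B.rank = b)
    (hMRD : ∀ v : Fin n → F, v ∈ Submodule.span F (Set.range B) → v ≠ 0 →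
      n - b + 1 ≤ rankq Fq F β v) :
    (Matrix.fromRows (A.map (algebraMap Fq F)) B).rank = a + b := by
  have han : a ≤ n := by simpa [hA] using A.rank_le_card_width
  have hdisj : Disjoint (Submodule.span F (Set.range (A.map (algebraMap Fq F)).row))
      (Submodule.span F (Set.range B.row)) := by
    refine Submodule.disjoint_def.mpr fun w hwA hwB => by_contra fun hw => ?_
    have hlarge := hMRD w hwB hw
    have hsmall := rankq_le_rank_of_mem_span_map β A hwA
    omega
  simpa using Matrix.rank_fromRows_of_disjoint
    (linearIndependent_row_map_algebraMap
      (Matrix.linearIndependent_row_of_rank_eq (by simpa using hA)))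
    (Matrix.linearIndependent_row_of_rank_eq (by simpa using hBrank)) hdisj

/-- If `A ∈ F_q^{a×n}` has rank `a` and `B ∈ F_{q^m}^{b×n}` is a parity-check
matrix of an `[n, n−b]` MRD code with `b ≤ n − a` (so `B` has rank `b` and every nonzero
vector in the `F_{q^m}`-row span of `B` has `F_q`-rank at least `n − b + 1`), then the
stacked matrix `[A; B]` has `F_{q^m}`-rank `a + b`. -/
theorem stacked_mrd_parities_full_rank (Fq F : Type*) [Field Fq] [Fintype Fq]
    [Field F] [Fintype F] [Algebra Fq F]
    (m n a b : ℕ) (hnm : n ≤ m) (hb : b ≤ n - a)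
    (β : Module.Basis (Fin m) Fq F)
    (A : Matrix (Fin a) (Fin n) Fq) (hA : A.rank = a)
    (B : Matrix (Fin b) (Fin n) F) (hBrank : B.rank = b)
    (hMRD : ∀ v : Fin n → F, v ∈ Submodule.span F (Set.range B) → v ≠ 0 →
      n - b + 1 ≤ rankq Fq F β v) :
    (Matrix.fromRows (A.map (algebraMap Fq F)) B).rank = a + b :=
  stacked_mrd_parities_full_rank_general Fq F m n a b hb β A hA B hBrank hMRD
end

section
/- Singleton-like bound for constant-dimension subspace codes: any code C ⊆ Grassmannian G_q(N, n_t) with minimum subspace distance d_S satisfies |C| ≤ [N − (d_S − 2)/2 choose max{n_t, N − n_t}]_q, where [· choose ·]_q is the Gaussian binomial coefficient. -/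
open Module Submodule

set_option maxHeartbeats 1000000
set_option synthInstance.maxHeartbeats 400000

section Aux

variable {K : Type*} [Field K] {V : Type*} [AddCommGroup V] [Module K V]

instance aux_finite_submodule {M : Type*} [AddCommGroup M] [Module K M] [Finite M] :
    Finite (Submodule K M) :=
  Finite.of_injective (fun S => (S : Set M)) SetLike.coe_injective

lemma aux_exists_submodule_finrank_eq [FiniteDimensional K V] {r : ℕ}
    (h : r ≤ finrank K V) : ∃ S : Submodule K V, finrank K S = r := by
  classical
  let b := Module.finBasis K V
  refine ⟨Submodule.span K (Set.range (⇑b ∘ Fin.castLE h)), ?_⟩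
  rw [finrank_span_eq_card (b.linearIndependent.comp _ (Fin.castLE_injective h))]
  simp

lemma aux_exists_le_finrank_eq [FiniteDimensional K V] (S : Submodule K V) {r : ℕ}
    (h : r ≤ finrank K S) : ∃ S' ≤ S, finrank K S' = r := by
  obtain ⟨S₀, hS₀⟩ := aux_exists_submodule_finrank_eq (V := S) h
  refine ⟨S₀.map S.subtype, Submodule.map_subtype_le S S₀, ?_⟩
  rw [← hS₀]
  exact ((Submodule.equivMapOfInjective S.subtype S.injective_subtype S₀).finrank_eq).symm

lemma aux_finrank_comap_mkQ [FiniteDimensional K V] (W : Submodule K V)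
    (Q : Submodule K (V ⧸ W)) :
    finrank K (Q.comap W.mkQ) = finrank K Q + finrank K W := by
  have hWle : W ≤ Q.comap W.mkQ := by
    intro x hx
    simp only [Submodule.mem_comap, Submodule.mkQ_apply]
    rw [(Submodule.Quotient.mk_eq_zero W).2 hx]
    exact Q.zero_mem
  have h1 := LinearMap.finrank_range_add_finrank_ker (W.mkQ.comp (Q.comap W.mkQ).subtype)
  rw [LinearMap.range_comp, Submodule.range_subtype, LinearMap.ker_comp, Submodule.ker_mkQ,
    Submodule.map_comap_eq, Submodule.range_mkQ, top_inf_eq] at h1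
  rw [← h1, (Submodule.comapSubtypeEquivOfLe hWle).finrank_eq]

lemma aux_exists_ge_finrank_eq [FiniteDimensional K V] (S : Submodule K V) {r : ℕ}
    (h1 : finrank K S ≤ r) (h2 : r ≤ finrank K V) :
    ∃ T, S ≤ T ∧ finrank K T = r := by
  have hq : r - finrank K S ≤ finrank K (V ⧸ S) := by
    have := Submodule.finrank_quotient_add_finrank S; omega
  obtain ⟨Q, hQ⟩ := aux_exists_submodule_finrank_eq (V := V ⧸ S) hq
  refine ⟨Q.comap S.mkQ, ?_, ?_⟩
  · intro x hx
    simp only [Submodule.mem_comap, Submodule.mkQ_apply]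
    rw [(Submodule.Quotient.mk_eq_zero S).2 hx]
    exact Q.zero_mem
  · rw [aux_finrank_comap_mkQ, hQ]; omega

lemma aux_card_subspace_congr {V₂ : Type*} [AddCommGroup V₂] [Module K V₂]
    (e : V ≃ₗ[K] V₂) (r : ℕ) :
    Nat.card {S : Submodule K V // finrank K S = r} =
      Nat.card {S : Submodule K V₂ // finrank K S = r} := by
  refine Nat.card_congr (Equiv.subtypeEquiv
    (Submodule.orderIsoMapComapOfBijective (e : V →ₗ[K] V₂) e.bijective).toEquiv
    (fun S => ?_))
  rw [show ((Submodule.orderIsoMapComapOfBijective (e : V →ₗ[K] V₂) e.bijective).toEquiv S)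
      = S.map (e : V →ₗ[K] V₂) from rfl, LinearEquiv.finrank_map_eq]

end Aux

/-- The Gaussian binomial coefficient `[s choose r]_q`: the number of `r`-dimensional
`F_q`-subspaces of `F_q^s`. -/
noncomputable def gaussBinom (Fq : Type*) [Field Fq] [Fintype Fq] (s r : ℕ) : ℕ :=
  Nat.card {U : Submodule Fq (Fin s → Fq) // Module.finrank Fq U = r}

/-- Symmetry-type inequality for Gaussian binomial coefficients via dual annihilators. -/
lemma gaussBinom_le_symm (Fq : Type*) [Field Fq] [Fintype Fq] {m a : ℕ} (h : a ≤ m) :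
    gaussBinom Fq m a ≤ gaussBinom Fq m (m - a) := by
  classical
  have hV : finrank Fq (Fin m → Fq) = m := Module.finrank_fin_fun (R := Fq)
  haveI : Finite (Module.Dual Fq (Fin m → Fq)) :=
    Finite.of_injective (fun f => (f : (Fin m → Fq) → Fq)) DFunLike.coe_injective
  have e : Module.Dual Fq (Fin m → Fq) ≃ₗ[Fq] (Fin m → Fq) :=
    LinearEquiv.ofFinrankEq _ _ (Subspace.dual_finrank_eq)
  have hcongr := aux_card_subspace_congr e (m - a)
  rw [gaussBinom, gaussBinom, ← hcongr]
  refine Nat.card_le_card_of_injective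
    (fun S => ⟨S.1.dualAnnihilator, ?_⟩) ?_
  · have h1 : finrank Fq ((Fin m → Fq) ⧸ S.1) = finrank Fq S.1.dualAnnihilator :=
      (Subspace.quotEquivAnnihilator S.1).finrank_eq
    have h2 := Submodule.finrank_quotient_add_finrank S.1
    have h3 := S.2
    rw [hV] at h2
    rw [← h1]
    omega
  · intro S T hST
    apply Subtype.ext
    have := congrArg Subtype.val hST
    exact Subspace.dualAnnihilator_inj.1 this

/-- Singleton-like bound for constant-dimension subspace codes: any code
`C ⊆ G_q(N, n_t)` with minimum subspace distance `d_S` satisfies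
`|C| ≤ [N − (d_S − 2)/2 choose max{n_t, N − n_t}]_q`. -/
theorem singleton_bound_subspace_codes (Fq : Type*) [Field Fq] [Fintype Fq]
    (N nt dS : ℕ)
    (C : Set (Submodule Fq (Fin N → Fq)))
    (hdim : ∀ U ∈ C, Module.finrank Fq U = nt)
    (hmin : IsLeast {r : ℕ | ∃ U ∈ C, ∃ V ∈ C, U ≠ V ∧
        Module.finrank Fq ↥(U ⊔ V) - Module.finrank Fq ↥(U ⊓ V) = r} dS) :
    Nat.card C ≤ gaussBinom Fq (N - (dS - 2) / 2) (max nt (N - nt)) := by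
  classical
  have hVfin : finrank Fq (Fin N → Fq) = N := Module.finrank_fin_fun (R := Fq)
  obtain ⟨⟨U₀, hU₀, V₀, hV₀, hne₀, hd₀⟩, hlb⟩ := hmin
  have hsum₀ := Submodule.finrank_sup_add_finrank_inf_eq U₀ V₀
  rw [hdim U₀ hU₀, hdim V₀ hV₀] at hsum₀
  set k := finrank Fq ↥(U₀ ⊓ V₀) with hk
  -- k < nt
  have hklt : k < nt := by
    rcases lt_or_ge k nt with h | h
    · exact h
    · exfalso
      have h1 : U₀ ⊓ V₀ = U₀ :=
        Submodule.eq_of_le_of_finrank_le inf_le_left (by rw [hdim U₀ hU₀]; omega)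
      have h2 : U₀ = V₀ :=
        Submodule.eq_of_le_of_finrank_le (h1 ▸ inf_le_right)
          (by rw [hdim U₀ hU₀, hdim V₀ hV₀])
      exact hne₀ h2
  set δ := nt - k with hδ
  have hδ1 : 1 ≤ δ := by omega
  have hdS : dS = 2 * δ := by omega
  have hNsup : finrank Fq ↥(U₀ ⊔ V₀) ≤ N := le_trans (Submodule.finrank_le _) (le_of_eq hVfin)
  have hNδ : nt + δ ≤ N := by omega
  -- separation property from minimality
  have hsep : ∀ U ∈ C, ∀ V ∈ C, U ≠ V → finrank Fq ↥(U ⊓ V) + δ ≤ nt := by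
    intro U hU V hV hUV
    have hmem : dS ≤ finrank Fq ↥(U ⊔ V) - finrank Fq ↥(U ⊓ V) :=
      hlb ⟨U, hU, V, hV, hUV, rfl⟩
    have hs := Submodule.finrank_sup_add_finrank_inf_eq U V
    rw [hdim U hU, hdim V hV] at hs
    omega
  set m := N - (δ - 1) with hm
  have hmgoal : N - (dS - 2) / 2 = m := by omega
  rw [hmgoal]
  rcases le_or_gt nt (N - nt) with hcase | hcase
  · -- nt ≤ N - nt : max = N - nt. Shrink codewords inside a fixed subspace H of dim m.
    rw [max_eq_right hcase]
    obtain ⟨H, hH⟩ := aux_exists_submodule_finrank_eq (V := Fin N → Fq)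
      (r := m) (by rw [hVfin]; omega)
    set a := nt - δ + 1 with ha
    have hex : ∀ U : C, ∃ S' ≤ (U : Submodule Fq (Fin N → Fq)) ⊓ H, finrank Fq S' = a := by
      intro U
      refine aux_exists_le_finrank_eq _ ?_
      have hs := Submodule.finrank_sup_add_finrank_inf_eq (U : Submodule Fq (Fin N → Fq)) H
      have hle : finrank Fq ↥((U : Submodule Fq (Fin N → Fq)) ⊔ H) ≤ N :=
        le_trans (Submodule.finrank_le _) (le_of_eq hVfin)
      rw [hdim U U.2, hH] at hs
      omega
    choose S hSle hSrank using hex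
    have hSH : ∀ U : C, S U ≤ H := fun U => (hSle U).trans inf_le_right
    have hSU : ∀ U : C, S U ≤ (U : Submodule Fq (Fin N → Fq)) :=
      fun U => (hSle U).trans inf_le_left
    have hinj : Function.Injective
        (fun U : C => (⟨(S U).comap H.subtype,
          by rw [(Submodule.comapSubtypeEquivOfLe (hSH U)).finrank_eq]; exact hSrank U⟩ :
          {S' : Submodule Fq ↥H // finrank Fq S' = a})) := by
      intro U V h
      have hc : (S U).comap H.subtype = (S V).comap H.subtype := congrArg Subtype.val h
      have hmap : S U = S V := by
        have h1 := congrArg (Submodule.map H.subtype) hc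
        rwa [Submodule.map_comap_subtype, Submodule.map_comap_subtype,
          inf_eq_right.2 (hSH U), inf_eq_right.2 (hSH V)] at h1
      by_contra hne
      have hne' : (U : Submodule Fq (Fin N → Fq)) ≠ V := fun hh => hne (Subtype.ext hh)
      have hle : S U ≤ (U : Submodule Fq (Fin N → Fq)) ⊓ (V : Submodule Fq (Fin N → Fq)) :=
        le_inf (hSU U) (hmap ▸ hSU V)
      have hfr : a ≤ finrank Fq ↥((U : Submodule Fq (Fin N → Fq)) ⊓ V) :=
        (hSrank U) ▸ Submodule.finrank_mono hle
      have := hsep U U.2 V V.2 hne'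
      omega
    have hcard1 : Nat.card C ≤ Nat.card {S' : Submodule Fq ↥H // finrank Fq S' = a} :=
      Nat.card_le_card_of_injective _ hinj
    have eH : ↥H ≃ₗ[Fq] (Fin m → Fq) :=
      LinearEquiv.ofFinrankEq _ _ (by rw [hH, Module.finrank_fin_fun])
    have hcard2 : Nat.card {S' : Submodule Fq ↥H // finrank Fq S' = a} = gaussBinom Fq m a :=
      aux_card_subspace_congr eH a
    have hsymm : gaussBinom Fq m a ≤ gaussBinom Fq m (m - a) :=
      gaussBinom_le_symm Fq (by omega)
    have hma : m - a = N - nt := by omega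
    rw [← hma]
    omega
  · -- N - nt < nt : max = nt. Grow images of codewords in the quotient by W of dim δ - 1.
    rw [max_eq_left hcase.le]
    obtain ⟨W, hW⟩ := aux_exists_submodule_finrank_eq (V := Fin N → Fq)
      (r := δ - 1) (by rw [hVfin]; omega)
    have hquot : finrank Fq ((Fin N → Fq) ⧸ W) = m := by
      have := Submodule.finrank_quotient_add_finrank W
      rw [hVfin, hW] at this
      omega
    have hex : ∀ U : C, ∃ Q, (U : Submodule Fq (Fin N → Fq)).map W.mkQ ≤ Q ∧
        finrank Fq Q = nt := by
      intro U
      refine aux_exists_ge_finrank_eq _ ?_ ?_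
      · exact le_trans (Submodule.finrank_map_le _ _) (le_of_eq (hdim U U.2))
      · rw [hquot]; omega
    choose Q hQle hQrank using hex
    haveI : Finite ((Fin N → Fq) ⧸ W) := Finite.of_surjective W.mkQ (Submodule.mkQ_surjective W)
    have hinj : Function.Injective
        (fun U : C => (⟨Q U, hQrank U⟩ :
          {Q' : Submodule Fq ((Fin N → Fq) ⧸ W) // finrank Fq Q' = nt})) := by
      intro U V h
      have hc : Q U = Q V := congrArg Subtype.val h
      by_contra hne
      have hne' : (U : Submodule Fq (Fin N → Fq)) ≠ V := fun hh => hne (Subtype.ext hh)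
      have hUle : (U : Submodule Fq (Fin N → Fq)) ≤ (Q U).comap W.mkQ :=
        Submodule.map_le_iff_le_comap.1 (hQle U)
      have hVle : (V : Submodule Fq (Fin N → Fq)) ≤ (Q U).comap W.mkQ :=
        hc ▸ Submodule.map_le_iff_le_comap.1 (hQle V)
      have hT : finrank Fq ((Q U).comap W.mkQ) = nt + (δ - 1) := by
        rw [aux_finrank_comap_mkQ, hQrank U, hW]
      have hsupT : finrank Fq ↥((U : Submodule Fq (Fin N → Fq)) ⊔ V) ≤ nt + (δ - 1) :=
        hT ▸ Submodule.finrank_mono (sup_le hUle hVle)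
      have hs := Submodule.finrank_sup_add_finrank_inf_eq
        (U : Submodule Fq (Fin N → Fq)) (V : Submodule Fq (Fin N → Fq))
      rw [hdim U U.2, hdim V V.2] at hs
      have := hsep U U.2 V V.2 hne'
      omega
    have hcard1 : Nat.card C ≤
        Nat.card {Q' : Submodule Fq ((Fin N → Fq) ⧸ W) // finrank Fq Q' = nt} :=
      Nat.card_le_card_of_injective _ hinj
    have eQ : ((Fin N → Fq) ⧸ W) ≃ₗ[Fq] (Fin m → Fq) :=
      LinearEquiv.ofFinrankEq _ _ (by rw [hquot, Module.finrank_fin_fun])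
    have hcard2 : Nat.card {Q' : Submodule Fq ((Fin N → Fq) ⧸ W) // finrank Fq Q' = nt}
        = gaussBinom Fq m nt := aux_card_subspace_congr eQ nt
    omega
end
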